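/- arXiv:2405.11611 — 2 statements merged into one kernel-verified Lean document; each statement's English description precedes it below -/
import Mathlib

section
/- For each β ∈ ℝ and real constants A_i, B_i (i = 1,2,3) with A₁² = A₂² + A₃², B₁² = B₂² + B₃², and A_i e^{βt} + B_i e^{−βt} > 0 on an interval, the curves z_i(t) = (A_i e^{βt} + B_i e^{−βt})^{2/3} satisfy the following: there exists a constant λ ≥ 0 such that 2z_i(t)z_i''(t) + z_i'(t)² = λ z_i(t)² for all i and all t in the interval, and moreover z₁³ − z₂³ − z₃³ is constant in t. -/
/-- The curves `zᵢ(t) = (Aᵢ e^{βt} + Bᵢ e^{-βt})^{2/3}` with the Lorentzian constraints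
`A₁² = A₂² + A₃²`, `B₁² = B₂² + B₃²` satisfy the fixed-volume geodesic system
`2 zᵢ zᵢ'' + (zᵢ')² = λ zᵢ²` for some constant `λ ≥ 0`, and `z₁³ - z₂³ - z₃³` is
constant in `t`. -/
theorem stmt_9 (β : ℝ) (A B : Fin 3 → ℝ) (a b : ℝ)
    (hA : (A 0)^2 = (A 1)^2 + (A 2)^2) (hB : (B 0)^2 = (B 1)^2 + (B 2)^2)
    (z : Fin 3 → ℝ → ℝ)
    (hz : ∀ i t, z i t = (A i * Real.exp (β*t) + B i * Real.exp (-(β*t))) ^ ((2:ℝ)/3))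
    (hpos : ∀ i, ∀ t ∈ Set.Ioo a b, 0 < A i * Real.exp (β*t) + B i * Real.exp (-(β*t))) :
    (∃ lam : ℝ, 0 ≤ lam ∧ ∀ i, ∀ t ∈ Set.Ioo a b,
      2 * z i t * deriv (deriv (z i)) t + (deriv (z i) t)^2 = lam * (z i t)^2) ∧
    (∃ c : ℝ, ∀ t ∈ Set.Ioo a b, (z 0 t)^3 - (z 1 t)^3 - (z 2 t)^3 = c) := by
  constructor
  · refine ⟨(4/3) * β^2, by positivity, ?_⟩
    intro i t ht
    set P := A i with hP
    set Q := B i with hQ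
    set w : ℝ → ℝ := fun s => P * Real.exp (β*s) + Q * Real.exp (-(β*s)) with hwdef
    have hzi : z i = fun s => (w s) ^ ((2:ℝ)/3) := by
      funext s; rw [hz]
    have hwpos : ∀ s ∈ Set.Ioo a b, 0 < w s := fun s hs => hpos i s hs
    set w1 : ℝ → ℝ := fun s => β * (P * Real.exp (β*s) - Q * Real.exp (-(β*s))) with hw1def
    have hlin : ∀ s : ℝ, HasDerivAt (fun u : ℝ => β * u) β s := by
      intro s; simpa using (hasDerivAt_id s).const_mul β
    have hwd : ∀ s, HasDerivAt w (w1 s) s := by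
      intro s
      have h2 : HasDerivAt (fun u => Real.exp (β*u)) (Real.exp (β*s) * β) s :=
        (Real.hasDerivAt_exp _).comp s (hlin s)
      have h3 : HasDerivAt (fun u => Real.exp (-(β*u))) (Real.exp (-(β*s)) * -β) s :=
        (Real.hasDerivAt_exp _).comp s (hlin s).neg
      have h := (h2.const_mul P).add (h3.const_mul Q)
      exact h.congr_deriv (by simp [hw1def]; ring)
    have hw1d : ∀ s, HasDerivAt w1 (β^2 * w s) s := by
      intro s
      have h2 : HasDerivAt (fun u => Real.exp (β*u)) (Real.exp (β*s) * β) s :=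
        (Real.hasDerivAt_exp _).comp s (hlin s)
      have h3 : HasDerivAt (fun u => Real.exp (-(β*u))) (Real.exp (-(β*s)) * -β) s :=
        (Real.hasDerivAt_exp _).comp s (hlin s).neg
      have h := ((h2.const_mul P).sub (h3.const_mul Q)).const_mul β
      exact h.congr_deriv (by simp [hwdef]; ring)
    set g : ℝ → ℝ := fun s => w1 s * ((2:ℝ)/3) * w s ^ ((2:ℝ)/3 - 1) with hgdef
    have hzd : ∀ s ∈ Set.Ioo a b, HasDerivAt (z i) (g s) s := by
      intro s hs
      rw [hzi]
      exact (hwd s).rpow_const (Or.inl (hwpos s hs).ne')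
    have hderiv1 : ∀ s ∈ Set.Ioo a b, deriv (z i) s = g s :=
      fun s hs => (hzd s hs).deriv
    have heq : deriv (z i) =ᶠ[nhds t] g :=
      Filter.eventuallyEq_of_mem (isOpen_Ioo.mem_nhds ht) hderiv1
    have h1 : HasDerivAt (fun s => w1 s * ((2:ℝ)/3)) (β^2 * w t * ((2:ℝ)/3)) t :=
      (hw1d t).mul_const _
    have h2 : HasDerivAt (fun s => w s ^ ((2:ℝ)/3 - 1))
        (w1 t * ((2:ℝ)/3 - 1) * w t ^ ((2:ℝ)/3 - 1 - 1)) t :=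
      (hwd t).rpow_const (Or.inl (hwpos t ht).ne')
    have hgd : HasDerivAt g
        (β^2 * w t * ((2:ℝ)/3) * w t ^ ((2:ℝ)/3 - 1)
          + (w1 t * ((2:ℝ)/3)) * (w1 t * ((2:ℝ)/3 - 1) * w t ^ ((2:ℝ)/3 - 1 - 1))) t :=
      h1.mul h2
    have h2nd : deriv (deriv (z i)) t
        = β^2 * w t * ((2:ℝ)/3) * w t ^ ((2:ℝ)/3 - 1)
          + (w1 t * ((2:ℝ)/3)) * (w1 t * ((2:ℝ)/3 - 1) * w t ^ ((2:ℝ)/3 - 1 - 1)) := by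
      rw [heq.deriv_eq]; exact hgd.deriv
    rw [h2nd, hderiv1 t ht, hzi, hgdef]
    simp only
    have hu : 0 < w t := hwpos t ht
    set u := w t with hudef
    set c := w1 t with hcdef
    set v : ℝ := u ^ ((1:ℝ)/3) with hvdef
    have hv : 0 < v := Real.rpow_pos_of_pos hu _
    have e1 : u ^ ((2:ℝ)/3) = v^2 := by
      rw [hvdef, ← Real.rpow_natCast (u ^ ((1:ℝ)/3)) 2, ← Real.rpow_mul hu.le]
      norm_num
    have e2 : u ^ ((2:ℝ)/3 - 1) = v⁻¹ := by
      rw [show (2:ℝ)/3 - 1 = -(1/3) by norm_num, Real.rpow_neg hu.le, hvdef]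
    have e3 : u ^ ((2:ℝ)/3 - 1 - 1) = (v^4)⁻¹ := by
      rw [show (2:ℝ)/3 - 1 - 1 = -((4:ℝ)/3) by norm_num, Real.rpow_neg hu.le]
      congr 1
      rw [hvdef, ← Real.rpow_natCast (u ^ ((1:ℝ)/3)) 4, ← Real.rpow_mul hu.le]
      norm_num
    have e4 : u = v^3 := by
      rw [hvdef, ← Real.rpow_natCast (u ^ ((1:ℝ)/3)) 3, ← Real.rpow_mul hu.le]
      norm_num
    rw [e1, e2, e3, e4]
    field_simp
    ring
  · refine ⟨2*(A 0 * B 0 - A 1 * B 1 - A 2 * B 2), ?_⟩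
    intro t ht
    have hc : ∀ i, (z i t)^3 = (A i * Real.exp (β*t) + B i * Real.exp (-(β*t)))^2 := by
      intro i
      rw [hz]
      rw [← Real.rpow_natCast (_ ^ ((2:ℝ)/3)) 3, ← Real.rpow_mul (hpos i t ht).le]
      norm_num
    rw [hc 0, hc 1, hc 2]
    have hEF : Real.exp (β*t) * Real.exp (-(β*t)) = 1 := by
      rw [← Real.exp_add]; simp
    linear_combination (Real.exp (β*t))^2 * hA + (Real.exp (-(β*t)))^2 * hB
      + 2*(A 0 * B 0 - A 1 * B 1 - A 2 * B 2) * hEF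
end

section
/- For the cubic prepotential C = C_{ijk}y^iy^jy^k with symmetric coefficients C_{ijk} on a region where the matrix g_{ij} = (9/4)C_iC_j/C² − (3/2)C_{ij}/C is invertible (C_i = C_{ijk}y^jy^k, C_{ij} = C_{ijk}y^k, C > 0), the inverse matrix is given by g^{ij} = 2y^iy^j − (2/3)C·C^{ij}, where C^{ij} is the inverse of C_{ij}. That is, ((9/4)C_iC_k/C² − (3/2)C_{ik}/C)(2y^ky^j − (2/3)C·C^{kj}) = δ_i^j. -/
/-! With `A = C_{ij}` and `c = C_i`, the two matrices are `(9/4C²) c cᵀ - (3/2C) A` and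
`2 y yᵀ - (2/3) C A⁻¹`. Euler's identities `A y = c`, `c ⬝ y = C`, together with the symmetry of
`A` (which gives `cᵀ A⁻¹ = yᵀ`), reduce their product to `A A⁻¹ = 1` plus a multiple of `c yᵀ`
whose coefficient `9/(2C) - 3/(2C) - 3/C` vanishes. -/

open Matrix

section EulerIdentities

variable {n R : Type*} [Fintype n] [CommSemiring R] (T : n → n → n → R) (y : n → R)

theorem tensor_contract_isSymm (hsym : ∀ i j k, T i j k = T j i k) :
    (Matrix.of fun i j => ∑ k, T i j k * y k).IsSymm :=
  Matrix.ext fun i j => by simp only [transpose_apply, of_apply, hsym]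

theorem tensor_contract_mulVec (hsym : ∀ i j k, T i j k = T i k j) :
    (Matrix.of fun i j => ∑ k, T i j k * y k) *ᵥ y = fun i => ∑ j, ∑ k, T i j k * y j * y k := by
  ext i
  simp only [mulVec, dotProduct, of_apply, Finset.sum_mul]
  exact Finset.sum_congr rfl fun j _ => Finset.sum_congr rfl fun k _ => by rw [hsym]; ring

theorem tensor_contract_dotProduct :
    (fun i => ∑ j, ∑ k, T i j k * y j * y k) ⬝ᵥ y = ∑ i, ∑ j, ∑ k, T i j k * y i * y j * y k := by
  simp only [dotProduct, Finset.sum_mul]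
  exact Finset.sum_congr rfl fun i _ => Finset.sum_congr rfl fun j _ =>
    Finset.sum_congr rfl fun k _ => by ring

end EulerIdentities

section Metric

variable {n K : Type*} [Fintype n] [Field K]

def cubicMetric (C : K) (c : n → K) (A : Matrix n n K) : Matrix n n K :=
  (9 / 4 / C ^ 2) • vecMulVec c c - (3 / 2 / C) • A

def cubicMetricInv (C : K) (y : n → K) (B : Matrix n n K) : Matrix n n K :=
  (2 : K) • vecMulVec y y - (2 / 3 * C) • B

theorem cubicMetric_mul_cubicMetricInv [DecidableEq n] [CharZero K] {A B : Matrix n n K}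
    {y c : n → K} {C : K}
    (hA : A.IsSymm) (hAB : A * B = 1) (hAy : A *ᵥ y = c) (hcy : c ⬝ᵥ y = C) (hC : C ≠ 0) :
    cubicMetric C c A * cubicMetricInv C y B = 1 := by
  have hcB : c ᵥ* B = y := by
    rw [← hAy, ← hA.eq, mulVec_transpose, vecMul_vecMul, hAB, vecMul_one]
  rw [cubicMetric, cubicMetricInv, sub_mul, mul_sub, mul_sub]
  simp only [Matrix.smul_mul, Matrix.mul_smul, vecMulVec_mul, mul_vecMulVec, smul_mulVec,
    vecMulVec_mulVec, op_smul_eq_smul, smul_vecMulVec, hcy, hcB, hAy, hAB, smul_smul]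
  match_scalars
  · field_simp
    ring
  · field_simp

end Metric

open Finset in
/-- For a cubic prepotential `C = C_{ijk} yⁱ yʲ yᵏ` with symmetric coefficients, the
matrix `gⁱʲ = 2yⁱyʲ - (2/3)C Cⁱʲ` is inverse to
`g_{ij} = (9/4)C_iC_j/C² - (3/2)C_{ij}/C`. -/
theorem stmt_12 (n : ℕ) (T : Fin n → Fin n → Fin n → ℝ)
    (hsym₁ : ∀ i j k, T i j k = T j i k) (hsym₂ : ∀ i j k, T i j k = T i k j)
    (y : Fin n → ℝ)
    (C : ℝ) (hC : C = ∑ i, ∑ j, ∑ k, T i j k * y i * y j * y k)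
    (hCpos : 0 < C)
    (Ci : Fin n → ℝ) (hCi : ∀ i, Ci i = ∑ j, ∑ k, T i j k * y j * y k)
    (Cij : Matrix (Fin n) (Fin n) ℝ) (hCij : ∀ i j, Cij i j = ∑ k, T i j k * y k)
    (Cinv : Matrix (Fin n) (Fin n) ℝ)
    (hCinv : Cij * Cinv = 1 ∧ Cinv * Cij = 1)
    (g ginv : Matrix (Fin n) (Fin n) ℝ)
    (hg : ∀ i j, g i j = (9/4) * Ci i * Ci j / C^2 - (3/2) * Cij i j / C)
    (hginv : ∀ i j, ginv i j = 2 * y i * y j - (2/3) * C * Cinv i j) :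
    g * ginv = 1 := by
  have hg' : g = cubicMetric C Ci Cij := by
    ext i j
    simp only [cubicMetric, hg, Matrix.sub_apply, Matrix.smul_apply, vecMulVec_apply, smul_eq_mul]
    ring
  have hginv' : ginv = cubicMetricInv C y Cinv := by
    ext i j
    simp only [cubicMetricInv, hginv, Matrix.sub_apply, Matrix.smul_apply, vecMulVec_apply,
      smul_eq_mul]
    ring
  obtain rfl : Cij = Matrix.of fun i j => ∑ k, T i j k * y k := Matrix.ext hCij
  obtain rfl : Ci = fun i => ∑ j, ∑ k, T i j k * y j * y k := funext hCi
  rw [hg', hginv']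
  exact cubicMetric_mul_cubicMetricInv (tensor_contract_isSymm T y hsym₁) hCinv.1
    (tensor_contract_mulVec T y hsym₂) (hC ▸ tensor_contract_dotProduct T y) hCpos.ne'
end
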